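/- Let α ∈ ℝ with α ≠ 1 and let σ_α be the Parametric ReLU σ_α(x) = α·x for x < 0, σ_α(x) = x for x ≥ 0. Let N ≥ 2, set x_i = (i−1)/(N−1) and h = 1/(2(N−1)), and define the hat functions φ_{x_i}(x) = (σ_α(x − x_i + h) − 2·σ_α(x − x_i) + σ_α(x − x_i − h))/((1 − α)·h). Let b ∈ [0, 1), let c ≥ 1, define a(y) = (σ_α(y) − σ_α(y − c) − α·c)/(1 − α), I₁(x) = (Σ_{i : x_i ≥ 1/2} φ_{x_i}(x)) − b, I₂(x) = (Σ_{i : x_i < 1/2} φ_{x_i}(x)) − b, and f₂(x) = a(I₁(x))/(1 − b) − a(I₂(x))/(1 − b). Then: (i) f₂(x_i) = 1 if x_i ≥ 1/2 and f₂(x_i) = −1 if x_i < 1/2, for every i; and (ii) f₂(x) = 0 for every x ∈ ℝ with min_i |x − x_i| ≥ (1 − b)·h. -/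

import Mathlib

/-- The Parametric ReLU activation function with parameter `α`. -/
noncomputable def prelu (α x : ℝ) : ℝ := if x < 0 then α * x else x

/-- The hat basis function of half-width `h` centered at `t` built from three
Parametric ReLU neurons. -/
noncomputable def preluHat (α h t x : ℝ) : ℝ :=
  (prelu α (x - t + h) - 2 * prelu α (x - t) + prelu α (x - t - h)) / ((1 - α) * h)

/-- The clamp built from two Parametric ReLU neurons. -/
noncomputable def preluClamp (α c y : ℝ) : ℝ :=
  (prelu α y - prelu α (y - c) - α * c) / (1 - α)

lemma prelu_of_nonneg {α x : ℝ} (hx : 0 ≤ x) : prelu α x = x := by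
  simp [prelu, not_lt.mpr hx]

lemma prelu_of_nonpos {α x : ℝ} (hx : x ≤ 0) : prelu α x = α * x := by
  rcases lt_or_eq_of_le hx with h | h
  · simp [prelu, h]
  · subst h; simp [prelu]

lemma hat_eq {α h : ℝ} (hα : α ≠ 1) (hh : 0 < h) (t x : ℝ) :
    preluHat α h t x = max 0 (1 - |x - t| / h) := by
  have h1 : (1 : ℝ) - α ≠ 0 := sub_ne_zero.mpr (Ne.symm hα)
  have hne : h ≠ 0 := ne_of_gt hh
  unfold preluHat
  rcases le_or_gt h (x - t) with hd | hd
  · rw [prelu_of_nonneg (by linarith), prelu_of_nonneg (by linarith),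
      prelu_of_nonneg (by linarith), abs_of_nonneg (by linarith),
      max_eq_left (by rw [sub_nonpos, le_div_iff₀ hh]; linarith)]
    field_simp; ring
  rcases le_or_gt 0 (x - t) with hd2 | hd2
  · rw [prelu_of_nonneg (by linarith), prelu_of_nonneg (by linarith),
      prelu_of_nonpos (by linarith), abs_of_nonneg (by linarith),
      max_eq_right (by rw [sub_nonneg, div_le_one hh]; linarith)]
    field_simp; ring
  rcases le_or_gt (-h) (x - t) with hd3 | hd3
  · rw [prelu_of_nonneg (by linarith), prelu_of_nonpos (by linarith),
      prelu_of_nonpos (by linarith), abs_of_neg (by linarith),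
      max_eq_right (by rw [sub_nonneg, div_le_one hh]; linarith)]
    field_simp; ring
  · rw [prelu_of_nonpos (by linarith), prelu_of_nonpos (by linarith),
      prelu_of_nonpos (by linarith), abs_of_neg (by linarith),
      max_eq_left (by rw [sub_nonpos, le_div_iff₀ hh]; linarith)]
    field_simp; ring

lemma clamp_of_nonpos {α c y : ℝ} (hc : 0 < c) (hy : y ≤ 0) :
    preluClamp α c y = 0 := by
  unfold preluClamp
  rw [prelu_of_nonpos hy, prelu_of_nonpos (by linarith)]
  have : α * y - α * (y - c) - α * c = 0 := by ring
  rw [this, zero_div]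

lemma clamp_of_mem {α c y : ℝ} (hα : α ≠ 1) (h0 : 0 ≤ y) (hyc : y ≤ c) :
    preluClamp α c y = y := by
  have h1 : (1 : ℝ) - α ≠ 0 := sub_ne_zero.mpr (Ne.symm hα)
  unfold preluClamp
  rw [prelu_of_nonneg h0, prelu_of_nonpos (by linarith)]
  field_simp; ring

lemma spacing {N : ℕ} (hN : 2 ≤ N) {x : ℕ → ℝ}
    (hx : ∀ i, x i = ((i : ℝ) - 1) / ((N : ℝ) - 1)) {h : ℝ}
    (hh : h = 1 / (2 * ((N : ℝ) - 1))) {i j : ℕ} (hij : i ≠ j) :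
    2 * h ≤ |x i - x j| := by
  have hN2 : (2 : ℝ) ≤ (N : ℝ) := by exact_mod_cast hN
  have hM : (0 : ℝ) < (N : ℝ) - 1 := by linarith
  have hone : (1 : ℝ) ≤ |(i : ℝ) - (j : ℝ)| := by
    have h1 : (1 : ℤ) ≤ |(i : ℤ) - (j : ℤ)| :=
      Int.one_le_abs (sub_ne_zero.mpr (by exact_mod_cast hij))
    exact_mod_cast h1
  have habs : |x i - x j| = |(i : ℝ) - (j : ℝ)| / ((N : ℝ) - 1) := by
    rw [hx i, hx j, div_sub_div_same, abs_div, abs_of_pos hM]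
    congr 1
    congr 1
    ring
  rw [habs, hh]
  calc 2 * (1 / (2 * ((N : ℝ) - 1))) = 1 / ((N : ℝ) - 1) := by field_simp
    _ ≤ |(i : ℝ) - (j : ℝ)| / ((N : ℝ) - 1) := by gcongr

/-- 1-D binary classification network with Parametric ReLU
activations: zero training loss yet output 0 away from the training points. -/
theorem stmt_15 (α : ℝ) (hα : α ≠ 1) (N : ℕ) (hN : 2 ≤ N)
    (x : ℕ → ℝ) (hx : ∀ i, x i = ((i : ℝ) - 1) / ((N : ℝ) - 1))
    (h : ℝ) (hh : h = 1 / (2 * ((N : ℝ) - 1)))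
    (b : ℝ) (hb : 0 ≤ b ∧ b < 1) (c : ℝ) (hc : 1 ≤ c)
    (I₁ I₂ f₂ : ℝ → ℝ)
    (hI₁ : ∀ t, I₁ t =
      (∑ i ∈ (Finset.Icc 1 N).filter (fun i => (1 : ℝ) / 2 ≤ x i),
        preluHat α h (x i) t) - b)
    (hI₂ : ∀ t, I₂ t =
      (∑ i ∈ (Finset.Icc 1 N).filter (fun i => x i < (1 : ℝ) / 2),
        preluHat α h (x i) t) - b)
    (hf : ∀ t, f₂ t = preluClamp α c (I₁ t) / (1 - b) - preluClamp α c (I₂ t) / (1 - b)) :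
    (∀ i ∈ Finset.Icc 1 N,
      ((1 : ℝ) / 2 ≤ x i → f₂ (x i) = 1) ∧ (x i < (1 : ℝ) / 2 → f₂ (x i) = -1)) ∧
    (∀ t : ℝ, (∀ i ∈ Finset.Icc 1 N, (1 - b) * h ≤ |t - x i|) → f₂ t = 0) := by
  obtain ⟨hb0, hb1⟩ := hb
  have hN2 : (2 : ℝ) ≤ (N : ℝ) := by exact_mod_cast hN
  have hM : (0 : ℝ) < (N : ℝ) - 1 := by linarith
  have hh0 : 0 < h := by rw [hh]; positivity
  have h1b : 0 < 1 - b := by linarith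
  have hc0 : (0 : ℝ) < c := by linarith
  -- hat at its own center is 1
  have hat_self : ∀ i : ℕ, preluHat α h (x i) (x i) = 1 := by
    intro i
    rw [hat_eq hα hh0, sub_self, abs_zero, zero_div, sub_zero]
    exact max_eq_right zero_le_one
  -- hat at a different training point is 0
  have hat_other : ∀ i j : ℕ, i ≠ j → preluHat α h (x i) (x j) = 0 := by
    intro i j hij
    have hsp : 2 * h ≤ |x j - x i| := spacing hN hx hh (Ne.symm hij)
    rw [hat_eq hα hh0]
    exact max_eq_left (by rw [sub_nonpos, le_div_iff₀ hh0]; linarith)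
  constructor
  · intro i hi
    constructor
    · intro hcond
      have hS1 : (∑ k ∈ (Finset.Icc 1 N).filter (fun k => (1 : ℝ) / 2 ≤ x k),
          preluHat α h (x k) (x i)) = 1 := by
        rw [Finset.sum_eq_single_of_mem i (Finset.mem_filter.mpr ⟨hi, hcond⟩)
          (fun k _ hk => hat_other k i hk)]
        exact hat_self i
      have hS2 : (∑ k ∈ (Finset.Icc 1 N).filter (fun k => x k < (1 : ℝ) / 2),
          preluHat α h (x k) (x i)) = 0 := by
        refine Finset.sum_eq_zero (fun k hk => ?_)
        have hki : k ≠ i := by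
          intro e
          rw [Finset.mem_filter] at hk
          rw [e] at hk
          linarith [hk.2]
        exact hat_other k i hki
      rw [hf, hI₁, hI₂, hS1, hS2]
      rw [clamp_of_mem hα (le_of_lt h1b) (by linarith), clamp_of_nonpos hc0 (by linarith)]
      field_simp
      ring
    · intro hcond
      have hS2 : (∑ k ∈ (Finset.Icc 1 N).filter (fun k => x k < (1 : ℝ) / 2),
          preluHat α h (x k) (x i)) = 1 := by
        rw [Finset.sum_eq_single_of_mem i (Finset.mem_filter.mpr ⟨hi, hcond⟩)
          (fun k _ hk => hat_other k i hk)]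
        exact hat_self i
      have hS1 : (∑ k ∈ (Finset.Icc 1 N).filter (fun k => (1 : ℝ) / 2 ≤ x k),
          preluHat α h (x k) (x i)) = 0 := by
        refine Finset.sum_eq_zero (fun k hk => ?_)
        have hki : k ≠ i := by
          intro e
          rw [Finset.mem_filter] at hk
          rw [e] at hk
          linarith [hk.2]
        exact hat_other k i hki
      rw [hf, hI₁, hI₂, hS1, hS2]
      rw [clamp_of_mem hα (le_of_lt h1b) (by linarith), clamp_of_nonpos hc0 (by linarith)]
      field_simp
      ring
  · intro t ht
    have key : ∀ S : Finset ℕ, S ⊆ Finset.Icc 1 N →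
        (∑ k ∈ S, preluHat α h (x k) t) ≤ b := by
      intro S hS
      by_cases hex : ∃ j ∈ S, preluHat α h (x j) t ≠ 0
      · obtain ⟨j, hjS, hj⟩ := hex
        have hjd : |t - x j| < h := by
          by_contra hcon
          push_neg at hcon
          exact hj (by
            rw [hat_eq hα hh0]
            exact max_eq_left (by rw [sub_nonpos, le_div_iff₀ hh0]; linarith))
        rw [Finset.sum_eq_single_of_mem j hjS (fun k hkS hkj => by
          have hsp : 2 * h ≤ |x k - x j| := spacing hN hx hh hkj
          have htri : |x k - x j| ≤ |x k - t| + |t - x j| := abs_sub_le (x k) t (x j)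
          rw [abs_sub_comm (x k) t] at htri
          rw [hat_eq hα hh0]
          exact max_eq_left (by rw [sub_nonpos, le_div_iff₀ hh0]; linarith))]
        rw [hat_eq hα hh0]
        have hjb : (1 - b) * h ≤ |t - x j| := ht j (hS hjS)
        refine max_le hb0 ?_
        have hdiv : 1 - b ≤ |t - x j| / h := (le_div_iff₀ hh0).mpr (by linarith)
        linarith
      · push_neg at hex
        rw [Finset.sum_eq_zero hex]
        exact hb0
    have hI1le : I₁ t ≤ 0 := by
      rw [hI₁]
      have := key ((Finset.Icc 1 N).filter (fun i => (1 : ℝ) / 2 ≤ x i))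
        (Finset.filter_subset _ _)
      linarith
    have hI2le : I₂ t ≤ 0 := by
      rw [hI₂]
      have := key ((Finset.Icc 1 N).filter (fun i => x i < (1 : ℝ) / 2))
        (Finset.filter_subset _ _)
      linarith
    rw [hf, clamp_of_nonpos hc0 hI1le, clamp_of_nonpos hc0 hI2le]
    ring
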